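/- For δ > 0 with 1/δ ∈ ℕ, define φ : ℝ → ℝ by φ(t) = −t if 0 ≤ t < δ and φ(t) = 0 otherwise. Then for every t ∈ [0, 1] the function g(t) = t + Σ_{k=0}^{1/δ − 1} φ(t − kδ) equals δ⌊t/δ⌋, i.e., the stacked shifted activations implement entrywise quantization of [0,1] to the δ-grid {0, δ, 2δ, …, 1}. -/
import Mathlib


/-- Stacked shifted piecewise-linear activations implement quantization of
`[0,1]` to the `δ`-grid: with `φ(t) = −t` on `[0, δ)` and `0` otherwise,
`t + ∑_{k=0}^{1/δ−1} φ(t − kδ) = δ⌊t/δ⌋` for all `t ∈ [0,1]`. -/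
theorem quantization (δ : ℝ) (hδ : 0 < δ) (N : ℕ) (hN : (N : ℝ) = 1 / δ)
    (φ : ℝ → ℝ) (hφ : ∀ t, φ t = if 0 ≤ t ∧ t < δ then -t else 0)
    (t : ℝ) (ht : t ∈ Set.Icc (0 : ℝ) 1) :
    t + ∑ k ∈ Finset.range N, φ (t - k * δ) = δ * ⌊t / δ⌋ := by
  obtain ⟨ht0, ht1⟩ := ht
  have hm0 : 0 ≤ ⌊t / δ⌋ := Int.floor_nonneg.mpr (div_nonneg ht0 hδ.le)
  have hmN : ⌊t / δ⌋ ≤ (N : ℤ) := by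
    have h1 : t / δ ≤ (N : ℝ) := by
      rw [hN]; exact div_le_div_of_nonneg_right ht1 hδ.le
    have := Int.floor_le_floor h1
    simpa using this
  have key : ∀ k : ℕ, φ (t - k * δ) =
      if (k : ℤ) = ⌊t / δ⌋ then -(t - k * δ) else 0 := by
    intro k
    rw [hφ]
    congr 1
    simp only [eq_iff_iff]
    constructor
    · rintro ⟨h1, h2⟩
      symm
      rw [Int.floor_eq_iff]
      push_cast
      constructor
      · rw [le_div_iff₀ hδ]; linarith
      · rw [div_lt_iff₀ hδ]; linarith
    · intro hk
      obtain ⟨h1, h2⟩ := Int.floor_eq_iff.mp hk.symm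
      push_cast at h1 h2
      rw [le_div_iff₀ hδ] at h1
      rw [div_lt_iff₀ hδ] at h2
      constructor <;> nlinarith
  simp only [key]
  rcases lt_or_eq_of_le hmN with h | h
  · obtain ⟨j, hj⟩ := Int.eq_ofNat_of_zero_le hm0
    have hjN : j < N := by rw [hj] at h; exact_mod_cast h
    have hsum : ∑ k ∈ Finset.range N, (if (k : ℤ) = ⌊t / δ⌋ then -(t - k * δ) else 0)
        = -(t - j * δ) := by
      rw [Finset.sum_eq_single j]
      · simp [hj]
      · intro b _ hb
        have : (b : ℤ) ≠ ⌊t / δ⌋ := by rw [hj]; exact_mod_cast hb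
        simp [this]
      · intro hj'; exact absurd (Finset.mem_range.mpr hjN) hj'
    rw [hsum, hj]
    push_cast
    ring
  · have hsum : ∑ k ∈ Finset.range N, (if (k : ℤ) = ⌊t / δ⌋ then -(t - k * δ) else 0) = 0 := by
      apply Finset.sum_eq_zero
      intro k hk
      have : (k : ℤ) ≠ ⌊t / δ⌋ := by
        rw [h]
        exact_mod_cast (Finset.mem_range.mp hk).ne
      simp [this]
    rw [hsum, h]
    have hδN : δ * (N : ℝ) = 1 := by rw [hN]; field_simp
    have ht' : (N : ℝ) ≤ t / δ := by
      have := Int.floor_le (t / δ)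
      rw [h] at this; exact_mod_cast this
    rw [le_div_iff₀ hδ] at ht'
    have : t = 1 := le_antisymm ht1 (by nlinarith)
    push_cast [h]
    linarith
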